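/- arXiv:2308.06495 — 5 statements merged into one kernel-verified Lean document; each statement's English description precedes it below -/
import Mathlib

section
/- Let G : (0,1] → (0,∞) be continuous and increasing with lim_{x→0⁺} G(x) = 0, and satisfying ∫₀^d log log(1/G(x)) dx < ∞ for some d > 0. Let dμ_𝔻(z) = G(1−|z|) dA(z) on 𝔻. Then: (a) for every analytic function f on 𝔻 and every z ∈ 𝔻, |f(z)| ≤ 8·(1−|z|)^{−3}·G((1−|z|)/2)^{−1/2}·(∫_𝔻 |f(w)|² G(1−|w|) dA(w))^{1/2}; and (b) consequently there exists a majorant F on (0,1) (decreasing, tending to +∞ at 0⁺, with ∫₀^δ log F(t) dt < ∞ for some δ > 0) such that |f(z)| ≤ exp(F(1−|z|))·(∫_𝔻 |f|² dμ_𝔻)^{1/2} for all analytic f on 𝔻 and all z ∈ 𝔻. -/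
/-!
By the mean value property of the holomorphic function `f²` on circles, integrated in polar
coordinates, `π r² |f(z)|² ≤ ∫_{D(z,r)} |f|² dA` for `r = (1 - |z|)/2`. On `D(z,r)` the weight
`G(1 - |w|)` is at least `G(r)` since `G` is increasing, which gives (a). For (b) take
`F(t) = log (8 t⁻³ G(t/2)^(-1/2)) = log 8 + 3 log(1/t) + ½ log(1/G(t/2))`: near `0` both logarithms
exceed `1`, so `log F(t) ≤ log 11 + log(1/t) + log log(1/G(t/2))`, which is integrable near `0` by
the hypothesis on `G` after the substitution `t = 2x`.
-/

open MeasureTheory Set Filter Metric Complex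
open scoped Real ENNReal Topology

noncomputable section

/-- Normalized area measure on the unit disk (so that A(𝔻) = 1). -/
def mA : Measure ℂ := (ENNReal.ofReal Real.pi)⁻¹ • (volume.restrict (Metric.ball (0:ℂ) 1))

lemma lintegral_ball_eq_lintegral_circleMap {φ : ℂ → ℝ≥0∞} (hφ : Measurable φ) (z : ℂ) (r : ℝ) :
    ∫⁻ w in ball z r, φ w =
      ∫⁻ ρ in Ioo 0 r, ENNReal.ofReal ρ * ∫⁻ θ in Ioo (-π) π, φ (circleMap z ρ θ) := by
  set ψ := (ball z r).indicator φ
  have hpolar (p : ℝ × ℝ) : z + Complex.polarCoord.symm p = circleMap z p.1 p.2 := by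
    simp [Complex.polarCoord_symm_apply, circleMap, Complex.exp_mul_I]
  have hψ : Measurable fun p : ℝ × ℝ ↦ ENNReal.ofReal p.1 * ψ (circleMap z p.1 p.2) :=
    (ENNReal.measurable_ofReal.comp measurable_fst).mul
      ((hφ.indicator measurableSet_ball).comp (by unfold circleMap; fun_prop))
  have hcircle {ρ : ℝ} (hρ : 0 < ρ) :
      ∫⁻ θ in Ioo (-π) π, ENNReal.ofReal ρ * ψ (circleMap z ρ θ) =
        (Iio r).indicator
          (fun ρ ↦ ENNReal.ofReal ρ * ∫⁻ θ in Ioo (-π) π, φ (circleMap z ρ θ)) ρ := by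
    have hmem (θ : ℝ) : circleMap z ρ θ ∈ ball z r ↔ ρ < r := by
      rw [mem_ball, dist_eq, circleMap_sub_center, norm_circleMap_zero, abs_of_pos hρ]
    by_cases hρr : ρ ∈ Iio r
    · rw [indicator_of_mem hρr, ← lintegral_const_mul' _ _ ENNReal.ofReal_ne_top]
      simp only [ψ, indicator_of_mem ((hmem _).2 hρr)]
    · rw [indicator_of_notMem hρr]
      simp [ψ, indicator_of_notMem (mt (hmem _).1 hρr)]
  calc ∫⁻ w in ball z r, φ w = ∫⁻ w, ψ (z + w) := by
        rw [lintegral_add_left_eq_self, lintegral_indicator measurableSet_ball]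
    _ = ∫⁻ p in Ioi 0 ×ˢ Ioo (-π) π, ENNReal.ofReal p.1 * ψ (circleMap z p.1 p.2) := by
        rw [← Complex.lintegral_comp_polarCoord_symm, polarCoord_target]
        simp only [hpolar, smul_eq_mul]
    _ = ∫⁻ ρ in Ioi 0, ∫⁻ θ in Ioo (-π) π, ENNReal.ofReal ρ * ψ (circleMap z ρ θ) := by
        rw [Measure.volume_eq_prod, setLIntegral_prod _ hψ.aemeasurable]
    _ = _ := by
        rw [setLIntegral_congr_fun measurableSet_Ioi fun ρ hρ ↦ hcircle hρ,
          setLIntegral_indicator measurableSet_Iio, Iio_inter_Ioi]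

lemma ofReal_two_pi_mul_sq_norm_le_lintegral_circleMap {f : ℂ → ℂ} {z : ℂ} {ρ : ℝ}
    (hf : DiffContOnCl ℂ f (ball z |ρ|)) :
    ENNReal.ofReal (2 * π * ‖f z‖ ^ 2) ≤
      ∫⁻ θ in Ioo (-π) π, ENNReal.ofReal (‖f (circleMap z ρ θ)‖ ^ 2) := by
  set g : ℝ → ℂ := fun θ ↦ f (circleMap z ρ θ) ^ 2
  have hmean : ∫ θ in Ioo (-π) π, g θ = (2 * π : ℝ) • f z ^ 2 := by
    have hsq : Real.circleAverage (fun w ↦ f w ^ 2) z ρ = f z ^ 2 :=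
      DiffContOnCl.circleAverage ⟨hf.1.pow 2, hf.2.pow 2⟩
    have hper : g.Periodic (2 * π) := fun θ ↦ by simp [g, periodic_circleMap z ρ θ]
    rw [← hsq, Real.circleAverage_def, smul_inv_smul₀ Real.two_pi_pos.ne',
      ← integral_Ioc_eq_integral_Ioo, ← intervalIntegral.integral_of_le (by linarith [Real.pi_pos]),
      ← zero_add (2 * π), ← hper.intervalIntegral_add_eq (-π) 0, show -π + 2 * π = π by ring]
  calc ENNReal.ofReal (2 * π * ‖f z‖ ^ 2) = ‖∫ θ in Ioo (-π) π, g θ‖ₑ := by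
        rw [hmean, ← ofReal_norm, norm_smul, norm_pow, Real.norm_of_nonneg Real.two_pi_pos.le]
    _ ≤ ∫⁻ θ in Ioo (-π) π, ‖g θ‖ₑ := enorm_integral_le_lintegral_enorm g
    _ = _ := by simp only [g, ← ofReal_norm, norm_pow]

lemma ofReal_pi_mul_sq_mul_sq_norm_le_lintegral_ball {f : ℂ → ℂ} {z : ℂ} {r : ℝ} (hr : 0 ≤ r)
    (hf : DifferentiableOn ℂ f (ball z r)) :
    ENNReal.ofReal (π * r ^ 2 * ‖f z‖ ^ 2) ≤ ∫⁻ w in ball z r, ENNReal.ofReal (‖f w‖ ^ 2) := by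
  classical
  set φ := (ball z r).indicator fun w ↦ ENNReal.ofReal (‖f w‖ ^ 2)
  have hφ : Measurable φ := by
    rw [show φ = _ from piecewise_eq_indicator.symm]
    exact ContinuousOn.measurable_piecewise
      (ENNReal.continuous_ofReal.comp_continuousOn (hf.continuousOn.norm.pow 2))
      continuousOn_const measurableSet_ball
  have hradial : ∫ ρ in Ioo 0 r, ρ * (2 * π * ‖f z‖ ^ 2) = π * r ^ 2 * ‖f z‖ ^ 2 := by
    rw [integral_mul_const, ← integral_Ioc_eq_integral_Ioo, ← intervalIntegral.integral_of_le hr,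
      integral_id]
    ring
  have hcircle : ∀ ρ ∈ Ioo 0 r, ENNReal.ofReal (ρ * (2 * π * ‖f z‖ ^ 2)) ≤
      ENNReal.ofReal ρ * ∫⁻ θ in Ioo (-π) π, φ (circleMap z ρ θ) := by
    intro ρ hρ
    have hsub : closedBall z |ρ| ⊆ ball z r := by
      rw [abs_of_pos hρ.1]; exact closedBall_subset_ball hρ.2
    have hon (θ : ℝ) : φ (circleMap z ρ θ) = ENNReal.ofReal (‖f (circleMap z ρ θ)‖ ^ 2) :=
      indicator_of_mem (hsub (sphere_subset_closedBall (circleMap_mem_sphere' z ρ θ))) _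
    rw [ENNReal.ofReal_mul hρ.1.le]
    simp only [hon]
    gcongr
    exact ofReal_two_pi_mul_sq_norm_le_lintegral_circleMap (hf.diffContOnCl_ball hsub)
  calc ENNReal.ofReal (π * r ^ 2 * ‖f z‖ ^ 2)
      = ∫⁻ ρ in Ioo 0 r, ENNReal.ofReal (ρ * (2 * π * ‖f z‖ ^ 2)) := by
        rw [← hradial, ofReal_integral_eq_lintegral_ofReal]
        · exact (continuous_id.mul continuous_const).integrableOn_Icc.mono_set Ioo_subset_Icc_self
        · filter_upwards [ae_restrict_mem measurableSet_Ioo] with ρ hρ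
          exact mul_nonneg hρ.1.le (by positivity)
    _ ≤ ∫⁻ ρ in Ioo 0 r, ENNReal.ofReal ρ * ∫⁻ θ in Ioo (-π) π, φ (circleMap z ρ θ) :=
        setLIntegral_mono' measurableSet_Ioo hcircle
    _ = ∫⁻ w in ball z r, φ w := (lintegral_ball_eq_lintegral_circleMap hφ z r).symm
    _ = _ := setLIntegral_congr_fun measurableSet_ball fun w hw ↦ indicator_of_mem hw _

lemma ofReal_mul_sq_mul_sq_norm_le_lintegral_mA {G : ℝ → ℝ} (hGmono : MonotoneOn G (Ioc 0 1))
    {f : ℂ → ℂ} (hf : DifferentiableOn ℂ f (ball 0 1)) {z : ℂ} (hz : z ∈ ball (0 : ℂ) 1) :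
    ENNReal.ofReal (G ((1 - ‖z‖) / 2) * ((1 - ‖z‖) / 2) ^ 2 * ‖f z‖ ^ 2) ≤
      ∫⁻ w, ENNReal.ofReal (‖f w‖ ^ 2 * G (1 - ‖w‖)) ∂mA := by
  set r := (1 - ‖z‖) / 2
  have hz1 : ‖z‖ < 1 := mem_ball_zero_iff.1 hz
  have h2r : 1 - ‖z‖ = 2 * r := by ring
  have hr : 0 < r := by linarith
  have hball : ball z r ⊆ ball 0 1 := ball_subset_ball' (by rw [dist_zero_right]; linarith)
  have hweight : ∀ w ∈ ball z r,
      ENNReal.ofReal (‖f w‖ ^ 2) * ENNReal.ofReal (G r) ≤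
        ENNReal.ofReal (‖f w‖ ^ 2 * G (1 - ‖w‖)) := by
    intro w hw
    have hw' : ‖w‖ < ‖z‖ + r := by
      have := norm_le_norm_add_norm_sub' w z
      rw [mem_ball_iff_norm] at hw
      linarith
    rw [← ENNReal.ofReal_mul (sq_nonneg _)]
    gcongr
    exact hGmono ⟨hr, by linarith [norm_nonneg z]⟩ ⟨by linarith, by linarith [norm_nonneg w]⟩
      (by linarith)
  have hpi : ENNReal.ofReal π ≠ 0 := ENNReal.ofReal_ne_zero_iff.2 Real.pi_pos
  calc ENNReal.ofReal (G r * r ^ 2 * ‖f z‖ ^ 2)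
      = (ENNReal.ofReal π)⁻¹ * (ENNReal.ofReal (π * r ^ 2 * ‖f z‖ ^ 2) * ENNReal.ofReal (G r)) := by
        rw [← ENNReal.ofReal_mul (by positivity),
          show π * r ^ 2 * ‖f z‖ ^ 2 * G r = π * (G r * r ^ 2 * ‖f z‖ ^ 2) by ring,
          ENNReal.ofReal_mul Real.pi_pos.le, ENNReal.inv_mul_cancel_left hpi ENNReal.ofReal_ne_top]
    _ ≤ (ENNReal.ofReal π)⁻¹ *
          ((∫⁻ w in ball z r, ENNReal.ofReal (‖f w‖ ^ 2)) * ENNReal.ofReal (G r)) := by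
        gcongr
        exact ofReal_pi_mul_sq_mul_sq_norm_le_lintegral_ball hr.le (hf.mono hball)
    _ ≤ (ENNReal.ofReal π)⁻¹ * ∫⁻ w in ball z r, ENNReal.ofReal (‖f w‖ ^ 2 * G (1 - ‖w‖)) := by
        rw [← lintegral_mul_const' _ _ ENNReal.ofReal_ne_top]
        gcongr _ * ?_
        exact setLIntegral_mono' measurableSet_ball hweight
    _ ≤ (ENNReal.ofReal π)⁻¹ * ∫⁻ w in ball 0 1, ENNReal.ofReal (‖f w‖ ^ 2 * G (1 - ‖w‖)) := by
        gcongr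
    _ = ∫⁻ w, ENNReal.ofReal (‖f w‖ ^ 2 * G (1 - ‖w‖)) ∂mA := by
        rw [mA, lintegral_smul_measure, smul_eq_mul]

theorem ofReal_norm_le_mul_weighted_lintegral_rpow {G : ℝ → ℝ} (hGmono : MonotoneOn G (Ioc 0 1))
    (hGpos : ∀ x ∈ Ioc (0 : ℝ) 1, 0 < G x) {f : ℂ → ℂ} (hf : DifferentiableOn ℂ f (ball 0 1))
    {z : ℂ} (hz : z ∈ ball (0 : ℂ) 1) :
    ENNReal.ofReal ‖f z‖ ≤
      ENNReal.ofReal (8 / ((1 - ‖z‖) ^ 3 * √(G ((1 - ‖z‖) / 2)))) *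
        (∫⁻ w, ENNReal.ofReal (‖f w‖ ^ 2 * G (1 - ‖w‖)) ∂mA) ^ ((1 : ℝ) / 2) := by
  set r := (1 - ‖z‖) / 2
  have hz1 : ‖z‖ < 1 := mem_ball_zero_iff.1 hz
  have h2r : 1 - ‖z‖ = 2 * r := by ring
  have hr : 0 < r := by linarith
  have hr1 : r ≤ 1 := by linarith [norm_nonneg z]
  have hGr : 0 < G r := hGpos r ⟨hr, hr1⟩
  set s := √(G r) * r * ‖f z‖
  have hs : ENNReal.ofReal s ≤
      (∫⁻ w, ENNReal.ofReal (‖f w‖ ^ 2 * G (1 - ‖w‖)) ∂mA) ^ ((1 : ℝ) / 2) := by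
    calc ENNReal.ofReal s = ENNReal.ofReal (s ^ 2) ^ ((1 : ℝ) / 2) := by
          rw [ENNReal.ofReal_rpow_of_nonneg (by positivity) (by norm_num), ← Real.sqrt_eq_rpow,
            Real.sqrt_sq (by positivity)]
      _ ≤ _ := by
          gcongr
          convert ofReal_mul_sq_mul_sq_norm_le_lintegral_mA hGmono hf hz using 2
          rw [mul_pow, mul_pow, Real.sq_sqrt hGr.le]
  have hbound : ‖f z‖ ≤ 8 / ((1 - ‖z‖) ^ 3 * √(G r)) * s := by
    rw [h2r, show 8 / ((2 * r) ^ 3 * √(G r)) * s = ‖f z‖ / r ^ 2 by field_simp; ring,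
      le_div_iff₀ (by positivity)]
    exact mul_le_of_le_one_right (norm_nonneg _) (pow_le_one₀ hr.le hr1)
  calc ENNReal.ofReal ‖f z‖ ≤ ENNReal.ofReal (8 / ((1 - ‖z‖) ^ 3 * √(G r)) * s) :=
        ENNReal.ofReal_le_ofReal hbound
    _ = ENNReal.ofReal (8 / ((1 - ‖z‖) ^ 3 * √(G r))) * ENNReal.ofReal s :=
        ENNReal.ofReal_mul (by positivity)
    _ ≤ _ := by gcongr

lemma setLIntegral_Ioo_comp_div (φ : ℝ → ℝ≥0∞) {c : ℝ} (hc : 0 < c) (δ : ℝ) :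
    ∫⁻ t in Ioo 0 δ, φ (t / c) = ENNReal.ofReal c * ∫⁻ x in Ioo 0 (δ / c), φ x := by
  have himage : (c * ·) '' Ioo 0 (δ / c) = Ioo 0 δ := by
    rw [image_mul_left_Ioo hc, mul_zero, mul_div_cancel₀ _ hc.ne']
  rw [← himage, lintegral_image_eq_lintegral_abs_deriv_mul measurableSet_Ioo
    (f := (c * ·)) (fun x _ ↦ ((hasDerivAt_id' x).const_mul c).hasDerivWithinAt)
    (mul_right_injective₀ hc.ne').injOn, ← lintegral_const_mul' _ _ ENNReal.ofReal_ne_top]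
  simp [abs_of_pos hc, hc.ne']

def pointEvalMajorant (G : ℝ → ℝ) (t : ℝ) : ℝ :=
  Real.log (8 / (t ^ 3 * √(G (t / 2))))

section Majorant

variable {G : ℝ → ℝ}

lemma exp_pointEvalMajorant (hGpos : ∀ x ∈ Ioc (0 : ℝ) 1, 0 < G x) {t : ℝ} (ht : t ∈ Ioc 0 2) :
    Real.exp (pointEvalMajorant G t) = 8 / (t ^ 3 * √(G (t / 2))) := by
  have := ht.1
  have := hGpos (t / 2) ⟨by linarith [ht.1], by linarith [ht.2]⟩
  exact Real.exp_log (by positivity)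

lemma antitoneOn_pointEvalMajorant (hGmono : MonotoneOn G (Ioc 0 1))
    (hGpos : ∀ x ∈ Ioc (0 : ℝ) 1, 0 < G x) : AntitoneOn (pointEvalMajorant G) (Ioc 0 2) := by
  intro s hs t ht hst
  have hs2 : s / 2 ∈ Ioc (0 : ℝ) 1 := ⟨by linarith [hs.1], by linarith [hs.2]⟩
  have ht2 : t / 2 ∈ Ioc (0 : ℝ) 1 := ⟨by linarith [ht.1], by linarith [ht.2]⟩
  have := hs.1
  have := ht.1
  have := hGpos _ hs2
  have := hGpos _ ht2
  unfold pointEvalMajorant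
  gcongr
  exact hGmono hs2 ht2 (by linarith)

lemma tendsto_pointEvalMajorant (hGpos : ∀ x ∈ Ioc (0 : ℝ) 1, 0 < G x)
    (hG0 : Tendsto G (𝓝[>] 0) (𝓝 0)) : Tendsto (pointEvalMajorant G) (𝓝[>] 0) atTop := by
  have hhalf : Tendsto (· / 2) (𝓝[>] (0 : ℝ)) (𝓝[>] 0) :=
    tendsto_nhdsWithin_of_tendsto_nhds_of_eventually_within _
      (by simpa using ((continuous_id.div_const (2 : ℝ)).tendsto 0).mono_left nhdsWithin_le_nhds)
      (eventually_nhdsWithin_of_forall fun t (ht : 0 < t) ↦ half_pos ht)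
  have hden : Tendsto (fun t ↦ t ^ 3 * √(G (t / 2))) (𝓝[>] 0) (𝓝[>] 0) := by
    refine tendsto_nhdsWithin_of_tendsto_nhds_of_eventually_within _ ?_ ?_
    · simpa using ((continuous_pow 3).continuousWithinAt.tendsto (s := Ioi 0) (x := 0)).mul
        ((Real.continuous_sqrt.tendsto 0).comp (hG0.comp hhalf))
    · filter_upwards [Ioo_mem_nhdsGT (show (0 : ℝ) < 2 by norm_num)] with t ht
      have := ht.1
      have := hGpos (t / 2) ⟨by linarith [ht.1], by linarith [ht.2]⟩
      exact mem_Ioi.2 (by positivity)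
  exact Real.tendsto_log_atTop.comp <| by
    simpa [div_eq_mul_inv] using
      hden.inv_tendsto_nhdsGT_zero.const_mul_atTop (by norm_num : (0 : ℝ) < 8)

lemma log_pointEvalMajorant_le {t : ℝ} (ht0 : 0 < t) (ht : t ≤ Real.exp (-1))
    (hG0 : 0 < G (t / 2)) (hG1 : G (t / 2) ≤ Real.exp (-1)) :
    Real.log (pointEvalMajorant G t) ≤
      Real.log 11 - Real.log t + Real.log (Real.log (1 / G (t / 2))) := by
  set a := -Real.log t
  set b := -Real.log (G (t / 2))
  have ha : 1 ≤ a := by linarith [Real.log_le_log ht0 ht, Real.log_exp (-1)]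
  have hb : 1 ≤ b := by linarith [Real.log_le_log hG0 hG1, Real.log_exp (-1)]
  have hF : pointEvalMajorant G t = Real.log 8 + 3 * a + b / 2 := by
    unfold pointEvalMajorant
    rw [Real.log_div (by norm_num) (by positivity), Real.log_mul (by positivity) (by positivity),
      Real.log_pow, Real.log_sqrt hG0.le]
    push_cast
    ring
  have h8 : 0 ≤ Real.log 8 ∧ Real.log 8 ≤ 7 :=
    ⟨Real.log_nonneg (by norm_num),
      by linarith [Real.log_le_sub_one_of_pos (by norm_num : (0 : ℝ) < 8)]⟩
  calc Real.log (pointEvalMajorant G t) ≤ Real.log (11 * a * b) := by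
        apply Real.log_le_log (by rw [hF]; linarith) (by rw [hF]; nlinarith)
    _ = Real.log 11 + Real.log a + Real.log b := by
        rw [Real.log_mul (by positivity) (by positivity),
          Real.log_mul (by positivity) (by positivity)]
    _ ≤ Real.log 11 + a + Real.log b := by
        linarith [Real.log_le_sub_one_of_pos (by positivity : 0 < a)]
    _ = _ := by rw [one_div, Real.log_inv]; ring

lemma exists_lintegral_log_pointEvalMajorant_lt_top (hGpos : ∀ x ∈ Ioc (0 : ℝ) 1, 0 < G x)
    (hG0 : Tendsto G (𝓝[>] 0) (𝓝 0))
    (hLogLogInt : ∃ d > (0 : ℝ),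
      ∫⁻ x in Ioc 0 d, ENNReal.ofReal (Real.log (Real.log (1 / G x))) < ⊤) :
    ∃ δ > (0 : ℝ), ∫⁻ t in Ioo 0 δ, ENNReal.ofReal (Real.log (pointEvalMajorant G t)) < ⊤ := by
  obtain ⟨d, hd, hdInt⟩ := hLogLogInt
  obtain ⟨ε, hε, hεG⟩ := mem_nhdsGT_iff_exists_Ioo_subset.1
    (hG0.eventually (gt_mem_nhds (Real.exp_pos (-1))))
  have he1 : Real.exp (-1) < 1 := Real.exp_lt_one_iff.2 (by norm_num)
  set δ := min (Real.exp (-1)) (min ε d)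
  have hδ : δ ≤ Real.exp (-1) ∧ δ ≤ ε ∧ δ ≤ d :=
    ⟨min_le_left _ _, (min_le_right _ _).trans (min_le_left _ _),
      (min_le_right _ _).trans (min_le_right _ _)⟩
  set φ := fun x ↦ ENNReal.ofReal (Real.log (Real.log (1 / G x)))
  have hpt : ∀ t ∈ Ioo 0 δ, ENNReal.ofReal (Real.log (pointEvalMajorant G t)) ≤
      ENNReal.ofReal (Real.log 11) + ENNReal.ofReal (-Real.log t) + φ (t / 2) := by
    rintro t ⟨ht0, htδ⟩
    have hGt : G (t / 2) < Real.exp (-1) := hεG ⟨by linarith, by linarith⟩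
    calc ENNReal.ofReal (Real.log (pointEvalMajorant G t))
        ≤ ENNReal.ofReal (Real.log 11 + -Real.log t + Real.log (Real.log (1 / G (t / 2)))) :=
          ENNReal.ofReal_le_ofReal <| (log_pointEvalMajorant_le ht0 (by linarith)
            (hGpos _ ⟨by linarith, by linarith⟩) hGt.le).trans_eq (by ring)
      _ ≤ _ := ENNReal.ofReal_add_le.trans (add_le_add_left ENNReal.ofReal_add_le _)
  have hconst : ∫⁻ _ in Ioo 0 δ, ENNReal.ofReal (Real.log 11) < ⊤ := by
    rw [setLIntegral_const]
    exact ENNReal.mul_lt_top ENNReal.ofReal_lt_top measure_Ioo_lt_top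
  have hlog : ∫⁻ t in Ioo 0 δ, ENNReal.ofReal (-Real.log t) < ⊤ :=
    (intervalIntegral.intervalIntegrable_log'.neg.1.mono_set
      Ioo_subset_Ioc_self).setLIntegral_lt_top
  have hφ : ∫⁻ t in Ioo 0 δ, φ (t / 2) < ⊤ := by
    rw [setLIntegral_Ioo_comp_div φ two_pos]
    refine ENNReal.mul_lt_top ENNReal.ofReal_lt_top ((lintegral_mono_set ?_).trans_lt hdInt)
    exact fun x hx ↦ ⟨hx.1, by linarith [hx.2]⟩
  refine ⟨δ, lt_min (Real.exp_pos _) (lt_min hε hd),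
    (setLIntegral_mono' measurableSet_Ioo hpt).trans_lt ?_⟩
  rw [lintegral_add_left (by fun_prop), lintegral_add_left measurable_const]
  exact ENNReal.add_lt_top.2 ⟨ENNReal.add_lt_top.2 ⟨hconst, hlog⟩, hφ⟩

end Majorant

theorem point_evaluation_bound_general
    (G : ℝ → ℝ)
    (hGmono : MonotoneOn G (Set.Ioc 0 1))
    (hGpos : ∀ x ∈ Set.Ioc (0:ℝ) 1, 0 < G x)
    (hG0 : Tendsto G (𝓝[>] (0:ℝ)) (𝓝 0))
    (hLogLogInt : ∃ d > (0:ℝ),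
      ∫⁻ x in Set.Ioc (0:ℝ) d, ENNReal.ofReal (Real.log (Real.log (1 / G x))) < ⊤) :
    -- (a)
    (∀ f : ℂ → ℂ, DifferentiableOn ℂ f (Metric.ball 0 1) →
      ∀ z ∈ Metric.ball (0:ℂ) 1,
        ENNReal.ofReal (‖f z‖) ≤
          ENNReal.ofReal
            (8 / ((1 - ‖z‖) ^ 3 * Real.sqrt (G ((1 - ‖z‖) / 2)))) *
          (∫⁻ w, ENNReal.ofReal (‖f w‖ ^ 2 * G (1 - ‖w‖)) ∂mA)
            ^ ((1:ℝ)/2)) ∧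
    -- (b)
    (∃ F : ℝ → ℝ,
      AntitoneOn F (Set.Ioo 0 1) ∧
      Tendsto F (𝓝[>] (0:ℝ)) atTop ∧
      (∃ δ > (0:ℝ), ∫⁻ t in Set.Ioo (0:ℝ) δ, ENNReal.ofReal (Real.log (F t)) < ⊤) ∧
      ∀ f : ℂ → ℂ, DifferentiableOn ℂ f (Metric.ball 0 1) →
        ∀ z ∈ Metric.ball (0:ℂ) 1,
          ENNReal.ofReal (‖f z‖) ≤
            ENNReal.ofReal (Real.exp (F (1 - ‖z‖))) *
            (∫⁻ w, ENNReal.ofReal (‖f w‖ ^ 2 * G (1 - ‖w‖)) ∂mA)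
              ^ ((1:ℝ)/2)) := by
  refine ⟨fun f hf z hz ↦ ofReal_norm_le_mul_weighted_lintegral_rpow hGmono hGpos hf hz,
    pointEvalMajorant G,
    (antitoneOn_pointEvalMajorant hGmono hGpos).mono
      (Ioo_subset_Ioc_self.trans (Ioc_subset_Ioc_right one_le_two)),
    tendsto_pointEvalMajorant hGpos hG0,
    exists_lintegral_log_pointEvalMajorant_lt_top hGpos hG0 hLogLogInt, fun f hf z hz ↦ ?_⟩
  have hz1 : ‖z‖ < 1 := mem_ball_zero_iff.1 hz
  rw [exp_pointEvalMajorant hGpos ⟨by linarith, by linarith [norm_nonneg z]⟩]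
  exact ofReal_norm_le_mul_weighted_lintegral_rpow hGmono hGpos hf hz

/-- **Point evaluation bounds in 𝒫²(μ_𝔻).** For dμ_𝔻 = G(1-|z|)dA with G continuous,
increasing, tending to 0 at 0⁺ and satisfying (LogLogInt):
(a) the explicit bound |f(z)| ≤ 8 (1-|z|)⁻³ G((1-|z|)/2)^{-1/2} ‖f‖_{μ_𝔻};
(b) there is a majorant F with |f(z)| ≤ exp(F(1-|z|)) ‖f‖_{μ_𝔻}. -/
theorem point_evaluation_bound
    (G : ℝ → ℝ)
    (hGcont : ContinuousOn G (Set.Ioc 0 1))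
    (hGmono : MonotoneOn G (Set.Ioc 0 1))
    (hGpos : ∀ x ∈ Set.Ioc (0:ℝ) 1, 0 < G x)
    (hG0 : Tendsto G (𝓝[>] (0:ℝ)) (𝓝 0))
    (hLogLogInt : ∃ d > (0:ℝ),
      ∫⁻ x in Set.Ioc (0:ℝ) d, ENNReal.ofReal (Real.log (Real.log (1 / G x))) < ⊤) :
    -- (a)
    (∀ f : ℂ → ℂ, DifferentiableOn ℂ f (Metric.ball 0 1) →
      ∀ z ∈ Metric.ball (0:ℂ) 1,
        ENNReal.ofReal (‖f z‖) ≤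
          ENNReal.ofReal
            (8 / ((1 - ‖z‖) ^ 3 * Real.sqrt (G ((1 - ‖z‖) / 2)))) *
          (∫⁻ w, ENNReal.ofReal (‖f w‖ ^ 2 * G (1 - ‖w‖)) ∂mA)
            ^ ((1:ℝ)/2)) ∧
    -- (b)
    (∃ F : ℝ → ℝ,
      AntitoneOn F (Set.Ioo 0 1) ∧
      Tendsto F (𝓝[>] (0:ℝ)) atTop ∧
      (∃ δ > (0:ℝ), ∫⁻ t in Set.Ioo (0:ℝ) δ, ENNReal.ofReal (Real.log (F t)) < ⊤) ∧
      ∀ f : ℂ → ℂ, DifferentiableOn ℂ f (Metric.ball 0 1) →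
        ∀ z ∈ Metric.ball (0:ℂ) 1,
          ENNReal.ofReal (‖f z‖) ≤
            ENNReal.ofReal (Real.exp (F (1 - ‖z‖))) *
            (∫⁻ w, ENNReal.ofReal (‖f w‖ ^ 2 * G (1 - ‖w‖)) ∂mA)
              ^ ((1:ℝ)/2)) :=
  point_evaluation_bound_general G hGmono hGpos hG0 hLogLogInt
end
end

section
/- Let H be a complex vector space of analytic functions on 𝔻 (under pointwise operations) equipped with a norm making it a Banach space. Assume that H contains every bounded analytic function on 𝔻, and that for every bounded analytic function h on 𝔻 the multiplication map M_h : f ↦ h·f maps H into H and is a bounded linear operator on H. Call a bounded analytic function u on 𝔻 cyclic if there is a sequence of analytic polynomials (p_n) with ‖1 − p_n·u‖_H → 0. Then the product u·v of any two cyclic bounded analytic functions u and v is cyclic. -/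
open Metric
open scoped Topology

noncomputable section

/-- A bounded analytic function on the unit disk. -/
def BoundedAnalytic (u : ℂ → ℂ) : Prop :=
  DifferentiableOn ℂ u (Metric.ball 0 1) ∧ ∃ C, ∀ z ∈ Metric.ball (0:ℂ) 1, ‖u z‖ ≤ C

/-- Cyclicity of a bounded analytic function u in the Banach space H of analytic
functions on 𝔻 (presented via the realization map ι): the constant function 1
can be approximated in H by elements representing polynomial multiples of u. -/
def CyclicIn (H : Type*) [NormedAddCommGroup H] [NormedSpace ℂ H]
    (ι : H →ₗ[ℂ] (ℂ → ℂ)) (u : ℂ → ℂ) : Prop :=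
  ∀ oneH : H, (∀ z ∈ Metric.ball (0:ℂ) 1, ι oneH z = 1) →
    ∀ ε > (0:ℝ), ∃ (p : Polynomial ℂ) (g : H),
      (∀ z ∈ Metric.ball (0:ℂ) 1, ι g z = p.eval z * u z) ∧ ‖oneH - g‖ < ε

/-!
If `T` is multiplication by `p * u` on `H`, then `T 1 = p * u` while `T` maps polynomial
multiples of `v` to polynomial multiples of `u * v`. As `1` is a limit of polynomial multiples
of `v` and `T` is continuous, every `p * u` is a limit of polynomial multiples of `u * v`;
since `1` is a limit of the `p * u`, it is one of polynomial multiples of `u * v`.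
-/

theorem BoundedAnalytic.polynomial_eval_mul (p : Polynomial ℂ) {u : ℂ → ℂ}
    (hu : BoundedAnalytic u) : BoundedAnalytic (fun z => p.eval z * u z) := by
  obtain ⟨hud, C, hC⟩ := hu
  obtain ⟨B, hB⟩ := (isCompact_closedBall (0:ℂ) 1).exists_bound_of_continuousOn
    p.continuous.continuousOn
  have hB0 : 0 ≤ B := (norm_nonneg _).trans (hB 0 (by simp))
  refine ⟨p.differentiable.differentiableOn.mul hud, B * C, fun z hz => ?_⟩
  rw [norm_mul]
  exact mul_le_mul (hB z (ball_subset_closedBall hz)) (hC z hz) (norm_nonneg _) hB0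

section PolynomialMultiples

variable {H : Type*} [NormedAddCommGroup H] [NormedSpace ℂ H] (ι : H →ₗ[ℂ] (ℂ → ℂ))

def polynomialMultiples (u : ℂ → ℂ) : Set H :=
  {g | ∃ p : Polynomial ℂ, ∀ z ∈ ball (0:ℂ) 1, ι g z = p.eval z * u z}

theorem cyclicIn_iff {u : ℂ → ℂ} :
    CyclicIn H ι u ↔ ∀ oneH : H, (∀ z ∈ ball (0:ℂ) 1, ι oneH z = 1) →
      oneH ∈ closure (polynomialMultiples ι u) := by
  simp only [CyclicIn, Metric.mem_closure_iff, polynomialMultiples, dist_eq_norm]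
  exact forall₂_congr fun _ _ => forall₂_congr fun _ _ =>
    ⟨fun ⟨p, g, hg, hlt⟩ => ⟨g, ⟨p, hg⟩, hlt⟩, fun ⟨g, ⟨p, hg⟩, hlt⟩ => ⟨p, g, hg, hlt⟩⟩

theorem mapsTo_polynomialMultiples_mul {p : Polynomial ℂ} {u v : ℂ → ℂ} {T : H → H}
    (hT : ∀ f : H, ∀ z ∈ ball (0:ℂ) 1, ι (T f) z = p.eval z * u z * ι f z) :
    Set.MapsTo T (polynomialMultiples ι v) (polynomialMultiples ι fun z => u z * v z) := by
  rintro f ⟨q, hq⟩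
  refine ⟨p * q, fun z hz => ?_⟩
  rw [hT f z hz, hq z hz, Polynomial.eval_mul]
  ring

theorem polynomialMultiples_subset_closure_mul
    (hinj : ∀ f g : H, (∀ z ∈ ball (0:ℂ) 1, ι f z = ι g z) → f = g)
    (hmult : ∀ h : ℂ → ℂ, BoundedAnalytic h →
      ∃ T : H →L[ℂ] H, ∀ f : H, ∀ z ∈ ball (0:ℂ) 1, ι (T f) z = h z * ι f z)
    {u v : ℂ → ℂ} (hu : BoundedAnalytic u) {oneH : H} (hone : ∀ z ∈ ball (0:ℂ) 1, ι oneH z = 1)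
    (hv : oneH ∈ closure (polynomialMultiples ι v)) :
    polynomialMultiples ι u ⊆ closure (polynomialMultiples ι fun z => u z * v z) := by
  rintro g ⟨p, hg⟩
  obtain ⟨T, hT⟩ := hmult _ (hu.polynomial_eval_mul p)
  have hTone : T oneH = g := hinj _ _ fun z hz => by rw [hT oneH z hz, hone z hz, hg z hz, mul_one]
  rw [← hTone]
  exact (mapsTo_polynomialMultiples_mul ι hT).closure T.continuous hv

end PolynomialMultiples

theorem product_of_cyclic_is_cyclic_general
    (H : Type*) [NormedAddCommGroup H] [NormedSpace ℂ H]
    (ι : H →ₗ[ℂ] (ℂ → ℂ))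
    -- elements of H are (determined by) analytic functions on 𝔻
    (hinj : ∀ f g : H, (∀ z ∈ Metric.ball (0:ℂ) 1, ι f z = ι g z) → f = g)
    -- every bounded analytic function defines a bounded multiplication operator on H
    (hmult : ∀ h : ℂ → ℂ, BoundedAnalytic h →
      ∃ T : H →L[ℂ] H, ∀ f : H, ∀ z ∈ Metric.ball (0:ℂ) 1, ι (T f) z = h z * ι f z)
    (u v : ℂ → ℂ) (hu : BoundedAnalytic u)
    (hucyc : CyclicIn H ι u) (hvcyc : CyclicIn H ι v) :
    CyclicIn H ι (fun z => u z * v z) := by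
  rw [cyclicIn_iff] at hucyc hvcyc ⊢
  intro oneH hone
  exact closure_minimal
    (polynomialMultiples_subset_closure_mul ι hinj hmult hu hone (hvcyc oneH hone))
    isClosed_closure (hucyc oneH hone)

/-- **Products of cyclic functions are cyclic.** Let H be a Banach space of analytic
functions on 𝔻 containing all bounded analytic functions, on which every bounded
analytic function acts as a bounded multiplication operator. Then the product of
two cyclic bounded analytic functions is cyclic. -/
theorem product_of_cyclic_is_cyclic
    (H : Type*) [NormedAddCommGroup H] [NormedSpace ℂ H] [CompleteSpace H]
    (ι : H →ₗ[ℂ] (ℂ → ℂ))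
    -- elements of H are (determined by) analytic functions on 𝔻
    (hinj : ∀ f g : H, (∀ z ∈ Metric.ball (0:ℂ) 1, ι f z = ι g z) → f = g)
    (hana : ∀ f : H, DifferentiableOn ℂ (ι f) (Metric.ball 0 1))
    -- H contains every bounded analytic function
    (hcontains : ∀ h : ℂ → ℂ, BoundedAnalytic h →
      ∃ fh : H, ∀ z ∈ Metric.ball (0:ℂ) 1, ι fh z = h z)
    -- every bounded analytic function defines a bounded multiplication operator on H
    (hmult : ∀ h : ℂ → ℂ, BoundedAnalytic h →
      ∃ T : H →L[ℂ] H, ∀ f : H, ∀ z ∈ Metric.ball (0:ℂ) 1, ι (T f) z = h z * ι f z)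
    (u v : ℂ → ℂ) (hu : BoundedAnalytic u) (hv : BoundedAnalytic v)
    (hucyc : CyclicIn H ι u) (hvcyc : CyclicIn H ι v) :
    CyclicIn H ι (fun z => u z * v z) :=
  product_of_cyclic_is_cyclic_general H ι hinj hmult u v hu hucyc hvcyc
end
end

section
/- Let m : (0,∞) → (0,∞) be positive, continuous and decreasing with lim_{x→0⁺} m(x) = +∞, and let m_*(x) = inf_{y>0} (m(y) + x·y) be its lower Legendre envelope. Then the following are equivalent: (i) there exists δ > 0 such that ∫₀^δ log m(x) dx < ∞; (ii) ∫₁^∞ m_*(x)/(1+x²) dx < ∞. -/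
open MeasureTheory Set Filter
open scoped Real ENNReal Topology

noncomputable section

/-- Lower Legendre envelope m_*(x) = inf_{y>0} (m(y) + x y). -/
def lowerLegendre (m : ℝ → ℝ) (x : ℝ) : ℝ :=
  sInf ((fun y => m y + x * y) '' Set.Ioi 0)

/-!
For `x > 0` let `σ(x) = sup {t > 0 | x t < m t}`; since `m t / t` is strictly decreasing, the set is
the interval `(0, σ(x))` up to an endpoint. Splitting `inf_y (m y + x y)` at `y = σ(x)` gives
`x σ(x) ≤ m_*(x) ≤ 2 x σ(x)`, so (ii) holds iff `∫₁^∞ σ(x) / x dx < ∞`. As `σ(x)` is the measure of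
`{t > 0 | m t / t > x}`, the layer-cake formula turns this integral into `∫₀^∞ log⁺ (m t / t) dt`,
which is finite iff (i) holds: near `0`, `log (m t / t)` differs from `log (m t)` by the integrable
`log t`, and beyond `δ` it is at most `log⁺ (m δ / t)`.
-/

open Real

lemma ofReal_intervalIntegral_indicator_Ioi_one_inv {y : ℝ} (hy : 0 ≤ y) :
    ENNReal.ofReal (∫ t in 0..y, (Ioi 1).indicator (fun t : ℝ => t⁻¹) t) =
      ENNReal.ofReal (log y) := by
  rw [intervalIntegral.integral_of_le hy, integral_indicator measurableSet_Ioi,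
    Measure.restrict_restrict measurableSet_Ioi, inter_comm, Ioc_inter_Ioi,
    max_eq_right zero_le_one]
  rcases le_or_gt y 1 with hy1 | hy1
  · rw [Ioc_eq_empty hy1.not_gt, Measure.restrict_empty, integral_zero_measure,
      ENNReal.ofReal_zero, ENNReal.ofReal_of_nonpos (log_nonpos hy hy1)]
  · rw [← intervalIntegral.integral_of_le hy1.le, integral_inv_of_pos one_pos (by linarith),
      div_one]

theorem lintegral_ofReal_log_eq_lintegral_meas_lt {α : Type*} [MeasurableSpace α]
    (μ : Measure α) {f : α → ℝ} (f_nn : 0 ≤ᵐ[μ] f) (f_mble : AEMeasurable f μ) :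
    ∫⁻ a, ENNReal.ofReal (log (f a)) ∂μ =
      ∫⁻ x in Ioi 1, μ {a | x < f a} * ENNReal.ofReal x⁻¹ := by
  have g_intble : ∀ y > 0, IntervalIntegrable ((Ioi 1).indicator fun t : ℝ => t⁻¹) volume 0 y := by
    intro y hy
    rw [intervalIntegrable_iff_integrableOn_Ioc_of_le hy.le,
      integrableOn_indicator_iff measurableSet_Ioi]
    have : ContinuousOn (fun t : ℝ => t⁻¹) (Icc 1 y) :=
      continuousOn_inv₀.mono fun t ht => (zero_lt_one.trans_le ht.1).ne'
    exact this.integrableOn_Icc.mono_set fun t ht => ⟨ht.1.le, ht.2.2⟩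
  have g_nn : ∀ᵐ t ∂volume.restrict (Ioi 0), 0 ≤ (Ioi 1).indicator (fun t : ℝ => t⁻¹) t :=
    ae_of_all _ fun t => indicator_nonneg (fun t ht => inv_nonneg.2 (zero_le_one.trans ht.le)) t
  calc ∫⁻ a, ENNReal.ofReal (log (f a)) ∂μ
      = ∫⁻ a, ENNReal.ofReal (∫ t in 0..f a, (Ioi 1).indicator (fun t : ℝ => t⁻¹) t) ∂μ := by
        refine lintegral_congr_ae ?_
        filter_upwards [f_nn] with a ha
        rw [ofReal_intervalIntegral_indicator_Ioi_one_inv ha]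
    _ = ∫⁻ x in Ioi 0, μ {a | x < f a} * ENNReal.ofReal ((Ioi 1).indicator (fun t : ℝ => t⁻¹) x) :=
        lintegral_comp_eq_lintegral_meas_lt_mul μ f_nn f_mble g_intble g_nn
    _ = ∫⁻ x in Ioi 0, (Ioi 1).indicator (fun x => μ {a | x < f a} * ENNReal.ofReal x⁻¹) x := by
        congr 1 with x
        by_cases hx : x ∈ Ioi (1 : ℝ) <;> simp [hx]
    _ = ∫⁻ x in Ioi 1, μ {a | x < f a} * ENNReal.ofReal x⁻¹ := by
        rw [lintegral_indicator measurableSet_Ioi, Measure.restrict_restrict measurableSet_Ioi,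
          Ioi_inter_Ioi, max_eq_left zero_le_one]

lemma lintegral_lt_top_of_ae_le_const_mul {α : Type*} [MeasurableSpace α] {μ : Measure α}
    {f g : α → ℝ≥0∞} {c : ℝ≥0∞} (hc : c ≠ ⊤) (hfg : ∀ᵐ a ∂μ, f a ≤ c * g a)
    (hg : ∫⁻ a, g a ∂μ < ⊤) : ∫⁻ a, f a ∂μ < ⊤ :=
  calc ∫⁻ a, f a ∂μ ≤ ∫⁻ a, c * g a ∂μ := lintegral_mono_ae hfg
    _ = c * ∫⁻ a, g a ∂μ := lintegral_const_mul' c g hc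
    _ < ⊤ := ENNReal.mul_lt_top hc.lt_top hg

def balanceSet (m : ℝ → ℝ) (x : ℝ) : Set ℝ := {t | 0 < t ∧ x * t < m t}

/-- For continuous `m` this is the solution of `m t = x * t`. -/
def balancePoint (m : ℝ → ℝ) (x : ℝ) : ℝ := sSup (balanceSet m x)

section BalancePoint

variable {m : ℝ → ℝ} {x : ℝ}

lemma mem_balanceSet_of_le (hm : AntitoneOn m (Ioi 0)) (hx : 0 ≤ x) {t u : ℝ}
    (ht : t ∈ balanceSet m x) (hu : 0 < u) (hut : u ≤ t) : u ∈ balanceSet m x :=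
  ⟨hu, calc x * u ≤ x * t := mul_le_mul_of_nonneg_left hut hx
    _ < m t := ht.2
    _ ≤ m u := hm hu ht.1 hut⟩

lemma balanceSet_nonempty (hpos : ∀ t > 0, 0 < m t) (hm : AntitoneOn m (Ioi 0)) (hx : 0 < x) :
    (balanceSet m x).Nonempty := by
  set t := min 1 (m 1 / (2 * x))
  have ht : 0 < t := lt_min one_pos (div_pos (hpos 1 one_pos) (by positivity))
  refine ⟨t, ht, ?_⟩
  calc x * t ≤ x * (m 1 / (2 * x)) := mul_le_mul_of_nonneg_left (min_le_right _ _) hx.le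
    _ = m 1 / 2 := by field_simp
    _ < m 1 := half_lt_self (hpos 1 one_pos)
    _ ≤ m t := hm ht (mem_Ioi.2 one_pos) (min_le_left _ _)

lemma bddAbove_balanceSet (hm : AntitoneOn m (Ioi 0)) (hx : 0 < x) :
    BddAbove (balanceSet m x) := by
  refine ⟨max 1 (m 1 / x), fun t ht => ?_⟩
  rcases le_or_gt t 1 with ht1 | ht1
  · exact ht1.trans (le_max_left _ _)
  · refine le_max_of_le_right ((le_div_iff₀' hx).2 ?_)
    exact ht.2.le.trans (hm (mem_Ioi.2 one_pos) ht.1 ht1.le)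

lemma balancePoint_pos (hpos : ∀ t > 0, 0 < m t) (hm : AntitoneOn m (Ioi 0)) (hx : 0 < x) :
    0 < balancePoint m x :=
  let ⟨_, ht⟩ := balanceSet_nonempty hpos hm hx
  ht.1.trans_le (le_csSup (bddAbove_balanceSet hm hx) ht)

lemma volume_balanceSet (hpos : ∀ t > 0, 0 < m t) (hm : AntitoneOn m (Ioi 0)) (hx : 0 < x) :
    volume (balanceSet m x) = ENNReal.ofReal (balancePoint m x) := by
  have hIoo : Ioo 0 (balancePoint m x) ⊆ balanceSet m x := fun u hu =>
    let ⟨t, ht, hut⟩ := exists_lt_of_lt_csSup (balanceSet_nonempty hpos hm hx) hu.2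
    mem_balanceSet_of_le hm hx.le ht hu.1 hut.le
  have hIoc : balanceSet m x ⊆ Ioc 0 (balancePoint m x) := fun t ht =>
    ⟨ht.1, le_csSup (bddAbove_balanceSet hm hx) ht⟩
  refine le_antisymm ?_ ?_
  · simpa using measure_mono (μ := volume) hIoc
  · simpa using measure_mono (μ := volume) hIoo

lemma lowerLegendre_le (hpos : ∀ t > 0, 0 < m t) (hx : 0 ≤ x) {y : ℝ} (hy : 0 < y) :
    lowerLegendre m x ≤ m y + x * y := by
  refine csInf_le ⟨0, ?_⟩ (mem_image_of_mem _ hy)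
  rintro _ ⟨z, hz, rfl⟩
  exact add_nonneg (hpos z hz).le (mul_nonneg hx hz.le)

lemma mul_balancePoint_le_lowerLegendre (hpos : ∀ t > 0, 0 < m t) (hm : AntitoneOn m (Ioi 0))
    (hx : 0 < x) : x * balancePoint m x ≤ lowerLegendre m x := by
  refine le_csInf ((nonempty_Ioi).image _) ?_
  rintro _ ⟨y, hy, rfl⟩
  show x * balancePoint m x ≤ m y + x * y
  rw [← le_div_iff₀' hx]
  refine csSup_le (balanceSet_nonempty hpos hm hx) fun t ht => (le_div_iff₀' hx).2 ?_
  rcases le_or_gt t y with hty | hty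
  · nlinarith [hpos y hy]
  · nlinarith [hm hy ht.1 hty.le, ht.2, mul_pos hx (mem_Ioi.1 hy)]

lemma lowerLegendre_le_two_mul_balancePoint (hpos : ∀ t > 0, 0 < m t)
    (hm : AntitoneOn m (Ioi 0)) (hx : 0 < x) :
    lowerLegendre m x ≤ 2 * (x * balancePoint m x) := by
  rw [← mul_assoc, ← div_le_iff₀' (by positivity)]
  refine le_of_forall_gt_imp_ge_of_dense fun s hs => (div_le_iff₀' (by positivity)).2 ?_
  have hs0 : 0 < s := (balancePoint_pos hpos hm hx).trans hs
  have hms : m s ≤ x * s := not_lt.1 fun h =>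
    hs.not_ge (le_csSup (bddAbove_balanceSet hm hx) ⟨hs0, h⟩)
  linarith [lowerLegendre_le hpos hx.le hs0]

lemma balanceSet_eq_setOf_lt_div_inter_Ioi :
    balanceSet m x = {t | x < m t / t} ∩ Ioi 0 := by
  ext t
  simp only [balanceSet, mem_ofPred_eq, mem_inter_iff, mem_Ioi]
  exact ⟨fun ⟨ht, h⟩ => ⟨(lt_div_iff₀ ht).2 h, ht⟩, fun ⟨h, ht⟩ => ⟨ht, (lt_div_iff₀ ht).1 h⟩⟩

lemma ofReal_lowerLegendre_div_le (hpos : ∀ t > 0, 0 < m t) (hm : AntitoneOn m (Ioi 0))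
    (hx : 0 < x) :
    ENNReal.ofReal (lowerLegendre m x / (1 + x ^ 2)) ≤
      2 * (ENNReal.ofReal (balancePoint m x) * ENNReal.ofReal x⁻¹) := by
  rw [← ENNReal.ofReal_mul (balancePoint_pos hpos hm hx).le, ← ENNReal.ofReal_ofNat 2,
    ← ENNReal.ofReal_mul zero_le_two]
  refine ENNReal.ofReal_le_ofReal ?_
  have := lowerLegendre_le_two_mul_balancePoint hpos hm hx
  rw [div_le_iff₀ (by positivity)]
  calc lowerLegendre m x ≤ 2 * (x * balancePoint m x) := this
    _ = 2 * (balancePoint m x * x⁻¹) * x ^ 2 := by field_simp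
    _ ≤ 2 * (balancePoint m x * x⁻¹) * (1 + x ^ 2) := by
        have := balancePoint_pos hpos hm hx
        gcongr; linarith

lemma ofReal_balancePoint_mul_inv_le (hpos : ∀ t > 0, 0 < m t) (hm : AntitoneOn m (Ioi 0))
    (hx : 1 ≤ x) :
    ENNReal.ofReal (balancePoint m x) * ENNReal.ofReal x⁻¹ ≤
      2 * ENNReal.ofReal (lowerLegendre m x / (1 + x ^ 2)) := by
  have hx0 : 0 < x := zero_lt_one.trans_le hx
  rw [← ENNReal.ofReal_mul (balancePoint_pos hpos hm hx0).le, ← ENNReal.ofReal_ofNat 2,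
    ← ENNReal.ofReal_mul zero_le_two]
  refine ENNReal.ofReal_le_ofReal ?_
  have := mul_balancePoint_le_lowerLegendre hpos hm hx0
  rw [mul_div_assoc', le_div_iff₀ (by positivity)]
  calc balancePoint m x * x⁻¹ * (1 + x ^ 2) ≤ balancePoint m x * x⁻¹ * (2 * x ^ 2) := by
        have := balancePoint_pos hpos hm hx0
        gcongr; nlinarith
    _ = 2 * (x * balancePoint m x) := by field_simp
    _ ≤ 2 * lowerLegendre m x := by linarith

end BalancePoint

section LogIntegrability

variable {m : ℝ → ℝ}

lemma setLIntegral_Ioi_ofReal_log_div_lt_top {c δ : ℝ} (hc : 0 < c) (hδ : 0 < δ) :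
    ∫⁻ t in Ioi δ, ENNReal.ofReal (log (c / t)) < ⊤ := by
  have hle : ∀ t ∈ Ioi δ, ENNReal.ofReal (log (c / t)) ≤
      (Iio c).indicator (fun _ => ENNReal.ofReal (log (c / δ))) t := by
    intro t ht
    have ht0 : 0 < t := hδ.trans ht
    by_cases htc : t < c
    · rw [indicator_of_mem (mem_Iio.2 htc)]
      exact ENNReal.ofReal_le_ofReal
        (log_le_log (div_pos hc ht0) (div_le_div_of_nonneg_left hc.le hδ (le_of_lt ht)))
    · rw [indicator_of_notMem (mt mem_Iio.1 htc), nonpos_iff_eq_zero, ENNReal.ofReal_eq_zero]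
      exact log_nonpos (div_pos hc ht0).le ((div_le_one ht0).2 (not_lt.1 htc))
  calc ∫⁻ t in Ioi δ, ENNReal.ofReal (log (c / t))
      ≤ ∫⁻ t in Ioi δ, (Iio c).indicator (fun _ => ENNReal.ofReal (log (c / δ))) t :=
        setLIntegral_mono' measurableSet_Ioi hle
    _ = ENNReal.ofReal (log (c / δ)) * volume (Iio c ∩ Ioi δ) := by
        rw [lintegral_indicator_const measurableSet_Iio, Measure.restrict_apply measurableSet_Iio]
    _ < ⊤ := by
        rw [inter_comm, Ioi_inter_Iio, Real.volume_Ioo]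
        exact ENNReal.mul_lt_top ENNReal.ofReal_lt_top ENNReal.ofReal_lt_top

lemma exists_setLIntegral_log_lt_top_iff (hpos : ∀ t > 0, 0 < m t) (hm : AntitoneOn m (Ioi 0)) :
    (∃ δ > (0:ℝ), ∫⁻ t in Ioc 0 δ, ENNReal.ofReal (log (m t)) < ⊤) ↔
      ∫⁻ t in Ioi 0, ENNReal.ofReal (log (m t / t)) < ⊤ := by
  constructor
  · rintro ⟨δ, hδ, hfin⟩
    have head : ∫⁻ t in Ioc 0 δ, ENNReal.ofReal (log (m t / t)) < ⊤ := by
      have hle : ∀ t ∈ Ioc 0 δ, ENNReal.ofReal (log (m t / t)) ≤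
          ENNReal.ofReal (log (m t)) + ENNReal.ofReal (-log t) := fun t ht => by
        rw [log_div (hpos t ht.1).ne' ht.1.ne', sub_eq_add_neg]
        exact ENNReal.ofReal_add_le
      have hlog : ∫⁻ t in Ioc 0 δ, ENNReal.ofReal (-log t) < ⊤ :=
        (intervalIntegral.intervalIntegrable_log' (a := 0) (b := δ)).1.neg.lintegral_lt_top
      calc ∫⁻ t in Ioc 0 δ, ENNReal.ofReal (log (m t / t))
          ≤ ∫⁻ t in Ioc 0 δ, (ENNReal.ofReal (log (m t)) + ENNReal.ofReal (-log t)) :=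
            setLIntegral_mono' measurableSet_Ioc hle
        _ < ⊤ := by
            rw [lintegral_add_right _ (by fun_prop)]
            exact ENNReal.add_lt_top.2 ⟨hfin, hlog⟩
    have tail : ∫⁻ t in Ioi δ, ENNReal.ofReal (log (m t / t)) < ⊤ := by
      refine lt_of_le_of_lt (setLIntegral_mono' measurableSet_Ioi fun t ht => ?_)
        (setLIntegral_Ioi_ofReal_log_div_lt_top (hpos δ hδ) hδ)
      have ht0 : 0 < t := hδ.trans ht
      exact ENNReal.ofReal_le_ofReal (log_le_log (div_pos (hpos t ht0) ht0)
        (div_le_div_of_nonneg_right (hm hδ ht0 (le_of_lt ht)) ht0.le))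
    rw [← Ioc_union_Ioi_eq_Ioi hδ.le]
    exact (lintegral_union_le _ _ _).trans_lt (ENNReal.add_lt_top.2 ⟨head, tail⟩)
  · refine fun hfin => ⟨1, one_pos, lt_of_le_of_lt ?_ hfin⟩
    calc ∫⁻ t in Ioc 0 1, ENNReal.ofReal (log (m t))
        ≤ ∫⁻ t in Ioc 0 1, ENNReal.ofReal (log (m t / t)) :=
          setLIntegral_mono' measurableSet_Ioc fun t ht => ENNReal.ofReal_le_ofReal <| by
            rw [log_div (hpos t ht.1).ne' ht.1.ne']
            linarith [log_nonpos ht.1.le ht.2]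
      _ ≤ ∫⁻ t in Ioi 0, ENNReal.ofReal (log (m t / t)) :=
          lintegral_mono_set Ioc_subset_Ioi_self

end LogIntegrability

theorem log_integrability_iff_legendre_integrability_general
    (m : ℝ → ℝ)
    (hmpos : ∀ x > (0:ℝ), 0 < m x)
    (hmdec : AntitoneOn m (Set.Ioi 0)) :
    (∃ δ > (0:ℝ), ∫⁻ x in Set.Ioc (0:ℝ) δ, ENNReal.ofReal (Real.log (m x)) < ⊤) ↔
      ∫⁻ x in Set.Ioi (1:ℝ), ENNReal.ofReal (lowerLegendre m x / (1 + x ^ 2)) < ⊤ := by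
  have ratio_nonneg : 0 ≤ᵐ[volume.restrict (Ioi 0)] fun t => m t / t :=
    ae_restrict_of_forall_mem measurableSet_Ioi fun t ht => (div_pos (hmpos t ht) ht).le
  have ratio_aemeasurable : AEMeasurable (fun t => m t / t) (volume.restrict (Ioi 0)) :=
    (aemeasurable_restrict_of_antitoneOn measurableSet_Ioi hmdec).div aemeasurable_id
  have level_sets : ∀ x ∈ Ioi (1 : ℝ), volume.restrict (Ioi 0) {t | x < m t / t} =
      ENNReal.ofReal (balancePoint m x) := fun x hx => by
    rw [Measure.restrict_apply' measurableSet_Ioi, ← balanceSet_eq_setOf_lt_div_inter_Ioi,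
      volume_balanceSet hmpos hmdec (zero_lt_one.trans hx)]
  rw [exists_setLIntegral_log_lt_top_iff hmpos hmdec,
    lintegral_ofReal_log_eq_lintegral_meas_lt _ ratio_nonneg ratio_aemeasurable,
    setLIntegral_congr_fun measurableSet_Ioi fun x hx => by rw [level_sets x hx]]
  constructor <;> refine lintegral_lt_top_of_ae_le_const_mul (c := 2) ENNReal.ofNat_ne_top
    (ae_restrict_of_forall_mem measurableSet_Ioi fun x hx => ?_)
  exacts [ofReal_lowerLegendre_div_le hmpos hmdec (zero_lt_one.trans hx),
    ofReal_balancePoint_mul_inv_le hmpos hmdec (le_of_lt hx)]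

/-- **Beurling's lemma.** For a positive continuous decreasing m on (0,∞) with
m(x) → +∞ as x → 0⁺: ∫₀^δ log m < ∞ for some δ > 0 iff ∫₁^∞ m_*(x)/(1+x²) dx < ∞. -/
theorem log_integrability_iff_legendre_integrability
    (m : ℝ → ℝ)
    (hmpos : ∀ x > (0:ℝ), 0 < m x)
    (hmcont : ContinuousOn m (Set.Ioi 0))
    (hmdec : AntitoneOn m (Set.Ioi 0))
    (hmlim : Tendsto m (𝓝[>] (0:ℝ)) atTop) :
    (∃ δ > (0:ℝ), ∫⁻ x in Set.Ioc (0:ℝ) δ, ENNReal.ofReal (Real.log (m x)) < ⊤) ↔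
      ∫⁻ x in Set.Ioi (1:ℝ), ENNReal.ofReal (lowerLegendre m x / (1 + x ^ 2)) < ⊤ :=
  log_integrability_iff_legendre_integrability_general m hmpos hmdec
end
end

section
/- Let f(z) = ∑_{n≥0} f_n zⁿ be an analytic function on 𝔻 with rapid spectral decay: sup_{n≥0} |f_n|·exp(c√n) < ∞ for some c > 0. Then there exists c′ > 0 such that ∑_{n≥0} |f_n|²/M_n < ∞, where M_n = ∫_𝔻 exp(−c′/(1−|z|))·|z|^{2n} dA(z) are the moments of the radial weight exp(−c′/(1−|z|)) on 𝔻. -/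
open MeasureTheory Set Filter Metric Complex
open scoped Real ENNReal Topology

noncomputable section

/-! The moment `Mₙ` of the weight `exp (-c' / (1 - |z|))` is at least its integral over the
annulus `1 - t ≤ |z| ≤ 1 - t / 2`, whose normalized area is about `t` and on which the integrand
is at least `exp (-2c'/t) (1 - t)^(2n) ≥ exp (-2c'/t - 4tn)`. Taking `t ≍ 1 / √n` and `c'` small
compared with `c` gives `Mₙ ≳ exp (-c√n) / √n`, so `|fₙ|² / Mₙ ≲ √n exp (-c√n)`, which is
summable. -/

instance isProbabilityMeasure_mA : IsProbabilityMeasure mA := by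
  constructor
  rw [mA, Measure.smul_apply, Measure.restrict_apply' measurableSet_ball, univ_inter,
    Complex.volume_ball, ← ENNReal.ofReal_coe_nnreal, NNReal.coe_real_pi]
  simp [ENNReal.inv_mul_cancel, Real.pi_pos]

lemma ae_mA_norm_lt_one : ∀ᵐ z ∂mA, ‖z‖ < 1 := by
  refine Measure.ae_smul_measure ?_ _
  filter_upwards [ae_restrict_mem measurableSet_ball] with z hz
  rwa [mem_ball_zero_iff] at hz

lemma mA_real_of_subset_ball {s : Set ℂ} (hs : s ⊆ ball 0 1) :
    mA.real s = volume.real s / π := by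
  rw [measureReal_def, mA, Measure.smul_apply, Measure.restrict_apply' measurableSet_ball,
    inter_eq_self_of_subset_left hs, smul_eq_mul, ENNReal.toReal_mul, ENNReal.toReal_inv,
    ENNReal.toReal_ofReal Real.pi_pos.le, measureReal_def, div_eq_inv_mul]

lemma mA_real_ball {r : ℝ} (h₀ : 0 ≤ r) (h₁ : r ≤ 1) : mA.real (ball 0 r) = r ^ 2 := by
  rw [mA_real_of_subset_ball (ball_subset_ball h₁)]
  simp [measureReal_def, h₀, Real.pi_pos.ne']

lemma mA_real_closedBall {r : ℝ} (h₀ : 0 ≤ r) (h₁ : r < 1) :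
    mA.real (closedBall 0 r) = r ^ 2 := by
  rw [mA_real_of_subset_ball (closedBall_subset_ball h₁)]
  simp [measureReal_def, h₀, Real.pi_pos.ne']

lemma mA_real_closedBall_sdiff_ball {r₁ r₂ : ℝ} (h₀ : 0 ≤ r₁) (h₁₂ : r₁ ≤ r₂) (h₂ : r₂ < 1) :
    mA.real (closedBall 0 r₂ \ ball 0 r₁) = r₂ ^ 2 - r₁ ^ 2 := by
  rw [measureReal_sdiff ((ball_subset_ball h₁₂).trans ball_subset_closedBall) measurableSet_ball,
    mA_real_closedBall (h₀.trans h₁₂) h₂, mA_real_ball h₀ (h₁₂.trans h₂.le)]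

def radialMoment (c : ℝ) (n : ℕ) : ℝ := ∫ z, Real.exp (-c / (1 - ‖z‖)) * ‖z‖ ^ (2 * n) ∂mA

lemma integrable_radialMoment_integrand {c : ℝ} (hc : 0 ≤ c) (n : ℕ) :
    Integrable (fun z : ℂ => Real.exp (-c / (1 - ‖z‖)) * ‖z‖ ^ (2 * n)) mA := by
  refine Integrable.of_bound (by fun_prop) 1 ?_
  filter_upwards [ae_mA_norm_lt_one] with z hz
  rw [Real.norm_of_nonneg (by positivity)]
  refine mul_le_one₀ ?_ (by positivity) (pow_le_one₀ (norm_nonneg z) hz.le)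
  exact Real.exp_le_one_iff.2 (div_nonpos_of_nonpos_of_nonneg (neg_nonpos.2 hc) (by linarith))

lemma exp_neg_two_mul_le_one_sub {t : ℝ} (h₀ : 0 ≤ t) (h₁ : t ≤ 1 / 2) :
    Real.exp (-(2 * t)) ≤ 1 - t := by
  rw [Real.exp_neg]
  calc (Real.exp (2 * t))⁻¹ ≤ (1 + 2 * t)⁻¹ :=
        inv_anti₀ (by positivity) (by linarith [Real.add_one_le_exp (2 * t)])
    _ ≤ 1 - t := by
        rw [inv_le_iff_one_le_mul₀ (by positivity)]
        nlinarith

lemma le_radialMoment {c t : ℝ} (hc : 0 ≤ c) (ht₀ : 0 < t) (ht : t ≤ 1 / 2) (n : ℕ) :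
    Real.exp (-(2 * c / t) - 4 * t * n) * (t / 2) ≤ radialMoment c n := by
  set S := closedBall (0 : ℂ) (1 - t / 2) \ ball 0 (1 - t)
  have hS : t / 2 ≤ mA.real S := by
    rw [mA_real_closedBall_sdiff_ball (by linarith) (by linarith) (by linarith)]
    nlinarith
  have hbound : S ⊆ {z | Real.exp (-(2 * c / t) - 4 * t * n) ≤
      Real.exp (-c / (1 - ‖z‖)) * ‖z‖ ^ (2 * n)} := by
    rintro z ⟨hz₂, hz₁⟩
    rw [mem_closedBall_zero_iff] at hz₂
    rw [mem_ball_zero_iff, not_lt] at hz₁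
    have hweight : Real.exp (-(2 * c / t)) ≤ Real.exp (-c / (1 - ‖z‖)) := by
      have hdist : c / (1 - ‖z‖) ≤ c / (t / 2) :=
        div_le_div_of_nonneg_left hc (by positivity) (by linarith)
      rw [Real.exp_le_exp, neg_div]
      linarith [show c / (t / 2) = 2 * c / t by ring]
    have hpow : Real.exp (-(2 * t)) ^ (2 * n) ≤ ‖z‖ ^ (2 * n) :=
      pow_le_pow_left₀ (by positivity) ((exp_neg_two_mul_le_one_sub ht₀.le ht).trans hz₁) _
    calc Real.exp (-(2 * c / t) - 4 * t * n)
        = Real.exp (-(2 * c / t)) * Real.exp (-(2 * t)) ^ (2 * n) := by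
          rw [← Real.exp_nat_mul, ← Real.exp_add]; push_cast; ring_nf
      _ ≤ _ := mul_le_mul hweight hpow (by positivity) (by positivity)
  calc Real.exp (-(2 * c / t) - 4 * t * n) * (t / 2)
      ≤ Real.exp (-(2 * c / t) - 4 * t * n) * mA.real S :=
        mul_le_mul_of_nonneg_left hS (by positivity)
    _ ≤ _ := mul_le_mul_of_nonneg_left (measureReal_mono hbound) (by positivity)
    _ ≤ radialMoment c n := mul_meas_ge_le_integral_of_nonneg
        (ae_of_all _ fun z => by positivity) (integrable_radialMoment_integrand hc n) _

lemma exists_exp_neg_sqrt_le_radialMoment {c : ℝ} (hc : 0 < c) :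
    ∃ c' > 0, ∃ κ > 0, ∀ n : ℕ, 1 ≤ n →
      κ * Real.exp (-(c * √n)) / √n ≤ radialMoment c' n := by
  set a := min (c / 8) (1 / 2)
  have ha₀ : 0 < a := lt_min (by positivity) (by norm_num)
  have hac : a ≤ c / 8 := min_le_left _ _
  have ha : a ≤ 1 / 2 := min_le_right _ _
  refine ⟨a * c / 4, by positivity, a / 2, by positivity, fun n hn => ?_⟩
  have hs : 1 ≤ √(n : ℝ) := Real.one_le_sqrt.2 (by exact_mod_cast hn)
  have hsn : √(n : ℝ) ^ 2 = n := Real.sq_sqrt n.cast_nonneg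
  set s := √(n : ℝ)
  refine le_trans ?_ (le_radialMoment (t := a / s) (by positivity) (by positivity)
    ((div_le_self ha₀.le hs).trans ha) n)
  have hweight : 2 * (a * c / 4) / (a / s) = c * s / 2 := by
    field_simp
    ring
  have hpow : 4 * (a / s) * n = 4 * a * s := by
    rw [← hsn]
    field_simp
  calc a / 2 * Real.exp (-(c * s)) / s = Real.exp (-(c * s)) * (a / s / 2) := by ring
    _ ≤ _ := by
      refine mul_le_mul_of_nonneg_right (Real.exp_le_exp.2 ?_) (by positivity)
      rw [hweight, hpow]
      nlinarith

lemma summable_sqrt_mul_exp_neg_mul_sqrt {c : ℝ} (hc : 0 < c) :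
    Summable fun n : ℕ => √n * Real.exp (-(c * √n)) := by
  refine ((Real.summable_one_div_nat_pow.2 one_lt_two).mul_left (Nat.factorial 6 / c ^ 6)
    ).of_nonneg_of_le (fun n => by positivity) fun n => ?_
  rcases n.eq_zero_or_pos with rfl | hn
  · simp
  have hs : 1 ≤ √(n : ℝ) := Real.one_le_sqrt.2 (by exact_mod_cast hn)
  have hsn : √(n : ℝ) ^ 2 = n := Real.sq_sqrt n.cast_nonneg
  set s := √(n : ℝ)
  have hexp := Real.pow_div_factorial_le_exp (c * s) (by positivity) 6
  rw [Real.exp_neg, ← div_eq_mul_inv, div_le_iff₀ (Real.exp_pos _)]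
  refine le_trans ?_ (mul_le_mul_of_nonneg_left hexp (by positivity))
  rw [mul_pow, show s ^ 6 = n ^ 3 by rw [← hsn]; ring]
  field_simp
  nlinarith

/-- **Functions of rapid spectral decay lie in a space H₂*(M).** If the coefficients
of f satisfy |fₙ| = O(exp(-c√n)), then there is c′ > 0 such that ∑ |fₙ|²/Mₙ < ∞,
where Mₙ are the moments of the radial weight exp(-c′/(1-|z|)). -/
theorem rapid_spectral_decay_mem_H2star
    (f : ℕ → ℂ)
    (hRSD : ∃ c > (0:ℝ), ∃ C : ℝ, ∀ n : ℕ, ‖f n‖ * Real.exp (c * Real.sqrt n) ≤ C) :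
    ∃ c' > (0:ℝ),
      Summable (fun n : ℕ =>
        ‖f n‖ ^ 2 /
          ∫ z, Real.exp (-c' / (1 - ‖z‖)) * ‖z‖ ^ (2 * n) ∂mA) := by
  obtain ⟨c, hc, C, hC⟩ := hRSD
  obtain ⟨c', hc', κ, hκ, hM⟩ := exists_exp_neg_sqrt_le_radialMoment hc
  refine ⟨c', hc', ((summable_sqrt_mul_exp_neg_mul_sqrt hc).mul_left (C ^ 2 / κ)
    ).of_norm_bounded_eventually_nat ?_⟩
  filter_upwards [eventually_ge_atTop 1] with n hn
  have hf : ‖f n‖ ≤ C * Real.exp (-(c * √n)) := by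
    rw [Real.exp_neg, ← div_eq_mul_inv, le_div_iff₀ (Real.exp_pos _)]
    exact hC n
  have hMn := hM n hn
  have hs : 0 < √(n : ℝ) := Real.sqrt_pos.2 (by exact_mod_cast hn)
  change ‖‖f n‖ ^ 2 / radialMoment c' n‖ ≤ _
  rw [Real.norm_of_nonneg (div_nonneg (by positivity) (hMn.trans' (by positivity)))]
  calc ‖f n‖ ^ 2 / radialMoment c' n
      ≤ (C * Real.exp (-(c * √n))) ^ 2 / (κ * Real.exp (-(c * √n)) / √n) :=
        div_le_div₀ (by positivity) (pow_le_pow_left₀ (norm_nonneg _) hf 2) (by positivity) hMn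
    _ = C ^ 2 / κ * (√n * Real.exp (-(c * √n))) := by field_simp
end
end

section
/- Let f(z) = ∑_{n≥0} f_n zⁿ be an analytic function on 𝔻 with rapid spectral decay: sup_{n≥0} |f_n|·exp(c√n) < ∞ for some c > 0. Let h be a bounded analytic function on 𝔻 with Taylor coefficients (h_k)_{k≥0}. Then for every n ≥ 0 the series g_n = ∑_{k≥0} conj(h_k)·f_{n+k} converges absolutely, and the function g(z) = ∑_{n≥0} g_n zⁿ (which equals the co-analytic Toeplitz image T_{h̄} f = P₊(h̄·f)) again has rapid spectral decay: there exists c′ > 0 with sup_{n≥0} |g_n|·exp(c′√n) < ∞. -/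
open MeasureTheory Set Filter Metric Complex
open scoped Real ENNReal Topology

noncomputable section

/-- Taylor coefficient at the origin of an analytic function on 𝔻. -/
def taylorCoeff (h : ℂ → ℂ) (n : ℕ) : ℂ := iteratedDeriv n h 0 / (n.factorial : ℂ)

/-!
Since `√n + √k ≤ 2√(n + k)`, a decay `|f_m| ≤ C e^{-c√m}` splits as
`|f_{n+k}| ≤ C e^{-(c/2)√n} e^{-(c/2)√k}`. The Cauchy estimates bound the Taylor coefficients
of `h` by `sup_𝔻 |h|`, so `∑ₖ |h_k| |f_{n+k}| ≤ sup |h| · C · (∑ₖ e^{-(c/2)√k}) · e^{-(c/2)√n}`,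
and `e^{-a√k}` is summable because it decays faster than `k⁻²`.
-/

theorem Real.summable_exp_neg_mul_sqrt {a : ℝ} (ha : 0 < a) :
    Summable fun k : ℕ => Real.exp (-(a * Real.sqrt k)) := by
  have h_sqrt : Tendsto (fun k : ℕ => Real.sqrt k) atTop atTop :=
    Real.tendsto_sqrt_atTop.comp tendsto_natCast_atTop_atTop
  have h_littleO := (isLittleO_exp_neg_mul_rpow_atTop ha (-4)).comp_tendsto h_sqrt
  refine summable_of_isBigO_nat (Real.summable_nat_rpow.mpr (by norm_num : (-2 : ℝ) < -1)) ?_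
  refine (h_littleO.isBigO.congr_left fun k => by simp [neg_mul]).congr_right fun k => ?_
  simp only [Function.comp_apply, Real.sqrt_eq_rpow, ← Real.rpow_mul (Nat.cast_nonneg k)]
  norm_num

theorem Real.exp_neg_mul_sqrt_add_le {c x y : ℝ} (hc : 0 ≤ c) (hx : 0 ≤ x) (hy : 0 ≤ y) :
    Real.exp (-(c * Real.sqrt (x + y))) ≤
      Real.exp (-(c / 2 * Real.sqrt x)) * Real.exp (-(c / 2 * Real.sqrt y)) := by
  have hx' : Real.sqrt x ≤ Real.sqrt (x + y) := Real.sqrt_le_sqrt (by linarith)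
  have hy' : Real.sqrt y ≤ Real.sqrt (x + y) := Real.sqrt_le_sqrt (by linarith)
  rw [← Real.exp_add, Real.exp_le_exp]
  nlinarith

theorem norm_taylorCoeff_le_of_forall_mem_ball_norm_le {h : ℂ → ℂ} {R M : ℝ} (hR : 0 < R)
    (h_an : DifferentiableOn ℂ h (ball 0 R)) (hM : ∀ z ∈ ball (0 : ℂ) R, ‖h z‖ ≤ M) (k : ℕ) :
    ‖taylorCoeff h k‖ ≤ M / R ^ k := by
  have h_circle : ∀ r ∈ Ioo 0 R, ‖taylorCoeff h k‖ ≤ M / r ^ k := by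
    rintro r ⟨hr0, hrR⟩
    have h_sub : closedBall (0 : ℂ) r ⊆ ball 0 R := closedBall_subset_ball hrR
    have := Complex.norm_iteratedDeriv_le_of_forall_mem_sphere_norm_le k hr0
      (h_an.diffContOnCl_ball h_sub) fun z hz => hM z (h_sub (sphere_subset_closedBall hz))
    rw [taylorCoeff, norm_div, Complex.norm_natCast, div_le_iff₀ (by positivity)]
    linarith [mul_div_assoc (k.factorial : ℝ) M (r ^ k)]
  have h_lim : Tendsto (fun r : ℝ => M / r ^ k) (𝓝[<] R) (𝓝 (M / R ^ k)) :=
    ((continuousAt_const.div (continuousAt_id.pow k) (pow_ne_zero k hR.ne')).tendsto).mono_left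
      nhdsWithin_le_nhds
  exact ge_of_tendsto h_lim (eventually_of_mem (Ioo_mem_nhdsLT hR) h_circle)

def HasRapidDecay {E : Type*} [Norm E] (f : ℕ → E) : Prop :=
  ∃ c > (0 : ℝ), ∃ C : ℝ, ∀ n : ℕ, ‖f n‖ * Real.exp (c * Real.sqrt n) ≤ C

section RapidDecay

variable {E : Type*} [Norm E] {f : ℕ → E}

theorem HasRapidDecay.exists_norm_le (hf : HasRapidDecay f) :
    ∃ c > (0 : ℝ), ∃ C : ℝ, ∀ n : ℕ, ‖f n‖ ≤ C * Real.exp (-(c * Real.sqrt n)) := by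
  obtain ⟨c, hc, C, hC⟩ := hf
  refine ⟨c, hc, C, fun n => ?_⟩
  rw [Real.exp_neg, ← div_eq_mul_inv, le_div_iff₀ (Real.exp_pos _)]
  exact hC n

theorem hasRapidDecay_of_norm_le {c C : ℝ} (hc : 0 < c)
    (hf : ∀ n : ℕ, ‖f n‖ ≤ C * Real.exp (-(c * Real.sqrt n))) : HasRapidDecay f := by
  refine ⟨c, hc, C, fun n => ?_⟩
  rw [← le_div_iff₀ (Real.exp_pos _), div_eq_mul_inv, ← Real.exp_neg]
  exact hf n

end RapidDecay

section Toeplitz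

variable {R : Type*} [NormedRing R] {a f : ℕ → R} {M c C : ℝ}

theorem norm_mul_shift_le (ha : ∀ k, ‖a k‖ ≤ M) (hc : 0 ≤ c)
    (hf : ∀ m : ℕ, ‖f m‖ ≤ C * Real.exp (-(c * Real.sqrt m))) (n k : ℕ) :
    ‖a k * f (n + k)‖ ≤
      M * C * Real.exp (-(c / 2 * Real.sqrt n)) * Real.exp (-(c / 2 * Real.sqrt k)) := by
  have hM : 0 ≤ M := (norm_nonneg _).trans (ha 0)
  have hC : 0 ≤ C := nonneg_of_mul_nonneg_left ((norm_nonneg _).trans (hf 0)) (Real.exp_pos _)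
  calc ‖a k * f (n + k)‖ ≤ ‖a k‖ * ‖f (n + k)‖ := norm_mul_le _ _
    _ ≤ M * (C * Real.exp (-(c * Real.sqrt (n + k)))) := by
        gcongr
        · exact ha k
        · exact_mod_cast hf (n + k)
    _ ≤ M * (C * (Real.exp (-(c / 2 * Real.sqrt n)) * Real.exp (-(c / 2 * Real.sqrt k)))) := by
        gcongr
        exact Real.exp_neg_mul_sqrt_add_le hc n.cast_nonneg k.cast_nonneg
    _ = _ := by ring

theorem HasRapidDecay.summable_norm_mul_shift (ha : ∀ k, ‖a k‖ ≤ M) (hf : HasRapidDecay f)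
    (n : ℕ) : Summable fun k => ‖a k * f (n + k)‖ := by
  obtain ⟨c, hc, C, hC⟩ := hf.exists_norm_le
  exact .of_nonneg_of_le (fun _ => norm_nonneg _) (norm_mul_shift_le ha hc.le hC n)
    ((Real.summable_exp_neg_mul_sqrt (half_pos hc)).mul_left _)

theorem HasRapidDecay.tsum_mul_shift (ha : ∀ k, ‖a k‖ ≤ M) (hf : HasRapidDecay f) :
    HasRapidDecay fun n => ∑' k, a k * f (n + k) := by
  obtain ⟨c, hc, C, hC⟩ := hf.exists_norm_le
  have h_summable := Real.summable_exp_neg_mul_sqrt (half_pos hc)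
  refine hasRapidDecay_of_norm_le (half_pos hc)
    (C := M * C * ∑' k : ℕ, Real.exp (-(c / 2 * Real.sqrt k))) fun n => ?_
  calc ‖∑' k, a k * f (n + k)‖ ≤ ∑' k, ‖a k * f (n + k)‖ :=
        norm_tsum_le_tsum_norm (hf.summable_norm_mul_shift ha n)
    _ ≤ ∑' k : ℕ, M * C * Real.exp (-(c / 2 * Real.sqrt n)) * Real.exp (-(c / 2 * Real.sqrt k)) :=
        (hf.summable_norm_mul_shift ha n).tsum_le_tsum (norm_mul_shift_le ha hc.le hC n)
          (h_summable.mul_left _)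
    _ = _ := by rw [tsum_mul_left]; ring

end Toeplitz

/-- **Co-analytic Toeplitz operators preserve rapid spectral decay.** If f has
coefficients fₙ = O(exp(-c√n)) and h is bounded analytic on 𝔻 with Taylor
coefficients hₖ, then gₙ = ∑ₖ conj(hₖ) f_{n+k} converges absolutely and
(gₙ) = T_{h̄}f again has rapid spectral decay. -/
theorem toeplitz_preserves_rapid_spectral_decay
    (f : ℕ → ℂ)
    (hRSD : ∃ c > (0:ℝ), ∃ C : ℝ, ∀ n : ℕ, ‖f n‖ * Real.exp (c * Real.sqrt n) ≤ C)
    (h : ℂ → ℂ)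
    (h_an : DifferentiableOn ℂ h (Metric.ball 0 1))
    (h_bd : ∃ C, ∀ z ∈ Metric.ball (0:ℂ) 1, ‖h z‖ ≤ C) :
    (∀ n : ℕ,
      Summable (fun k : ℕ => ‖(starRingEnd ℂ) (taylorCoeff h k) * f (n + k)‖)) ∧
    ∃ c' > (0:ℝ), ∃ C : ℝ, ∀ n : ℕ,
      ‖∑' k : ℕ, (starRingEnd ℂ) (taylorCoeff h k) * f (n + k)‖ *
        Real.exp (c' * Real.sqrt n) ≤ C := by
  obtain ⟨M, hM⟩ := h_bd
  have h_coeff (k : ℕ) : ‖(starRingEnd ℂ) (taylorCoeff h k)‖ ≤ M := by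
    simpa using norm_taylorCoeff_le_of_forall_mem_ball_norm_le one_pos h_an hM k
  have hf : HasRapidDecay f := hRSD
  exact ⟨hf.summable_norm_mul_shift h_coeff, hf.tsum_mul_shift h_coeff⟩
end
end
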